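/- arXiv:1008.3829 — 2 statements merged into one kernel-verified Lean document; each statement's English description precedes it below -/
import Mathlib

section
/- Let 𝕏 be an agenda over m issues, F an aggregation mechanism for 𝕏 over n voters, j an issue, and ε ≥ 0. If DI^j(F) ≥ ε, then every aggregation mechanism H for 𝕏 over n voters with DI^j(H) = 0 satisfies d(F,H) ≥ ε/2. -/
/-!
The cells `{Z | Z^j = Y^j}` partition `𝕏^n`, and `DI^j(H) = 0` says exactly that `H^j` is
constant on every cell. Hence if `(F Z)^j ≠ (F Y)^j` for `Z` in the cell of `Y`, then `F` and
`H` disagree on issue `j` at `Z` or at `Y`. Averaging the conditional probability of the first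
event over the cells gives back its unconditional probability, so
`DI^j(F) ≤ 2 Pr[(F X)^j ≠ (H X)^j] ≤ 2 d(F, H)`.
-/
namespace JudgementAggregation

open Finset

open Classical in
noncomputable def prob {α : Type*} (s : Finset α) (P : α → Prop) : ℝ :=
  ((s.filter P).card : ℝ) / s.card

abbrev Opinion (m : ℕ) := Fin m → Bool
abbrev Profile (m n : ℕ) := Fin n → Opinion m
abbrev Mechanism (m n : ℕ) := Profile m n → Opinion m

/-- The column of all voters' answers on issue `j`. -/
def col {m n : ℕ} (Y : Profile m n) (j : Fin m) : Fin n → Bool := fun i => Y i j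

/-- The set of profiles all of whose rows are consistent opinions (i.e. the set 𝕏^n). -/
def profiles {m : ℕ} (X : Finset (Opinion m)) (n : ℕ) : Finset (Profile m n) :=
  Fintype.piFinset fun _ => X

/-- Inconsistency index: probability (uniform over 𝕏^n) that the aggregated opinion
is inconsistent. -/
noncomputable def IC {m n : ℕ} (X : Finset (Opinion m)) (F : Mechanism m n) : ℝ :=
  prob (profiles X n) (fun Y => F Y ∉ X)

/-- Distance between mechanisms: probability (uniform over 𝕏^n) of disagreement. -/
noncomputable def mdist {m n : ℕ} (X : Finset (Opinion m)) (F G : Mechanism m n) : ℝ :=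
  prob (profiles X n) (fun Y => F Y ≠ G Y)

/-- `F` is independent: on consistent profiles, each issue is aggregated from its own column. -/
def Independent {m n : ℕ} (X : Finset (Opinion m)) (F : Mechanism m n) : Prop :=
  ∃ f : Fin m → (Fin n → Bool) → Bool, ∀ Y ∈ profiles X n, ∀ j, F Y j = f j (col Y j)

open Classical in
/-- Dependency index of issue `j`:
`E_X [ Pr_Y [ (F X)^j ≠ (F Y)^j | Y^j = X^j ] ]`, everything uniform over 𝕏^n. -/
noncomputable def DIj {m n : ℕ} (X : Finset (Opinion m)) (F : Mechanism m n) (j : Fin m) : ℝ :=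
  (∑ Y ∈ profiles X n,
      prob ((profiles X n).filter (fun Z => col Z j = col Y j)) (fun Z => F Z j ≠ F Y j))
    / ((profiles X n).card : ℝ)

/-- Dependency index: the maximum of the issue-wise dependency indices. -/
noncomputable def DI {m n : ℕ} (X : Finset (Opinion m)) (F : Mechanism m n) : ℝ :=
  ⨆ j : Fin m, DIj X F j

section Prob

variable {α : Type*}

lemma prob_nonneg (s : Finset α) (P : α → Prop) : 0 ≤ prob s P := by
  unfold prob; positivity

lemma prob_le_one (s : Finset α) (P : α → Prop) : prob s P ≤ 1 := by
  classical
  unfold prob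
  exact div_le_one_of_le₀ (mod_cast card_filter_le s _) (Nat.cast_nonneg _)

lemma prob_mono (s : Finset α) {P Q : α → Prop} (h : ∀ a ∈ s, P a → Q a) :
    prob s P ≤ prob s Q := by
  classical
  unfold prob
  gcongr with a ha
  exact h a ha

lemma card_mul_prob (s : Finset α) (P : α → Prop) [DecidablePred P] :
    (s.card : ℝ) * prob s P = (s.filter P).card := by
  rcases s.eq_empty_or_nonempty with rfl | hne
  · simp
  · rw [prob, mul_div_cancel₀ _ (mod_cast hne.card_pos.ne')]
    congr

lemma not_of_prob_eq_zero {s : Finset α} {P : α → Prop} (h : prob s P = 0) {a : α}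
    (ha : a ∈ s) : ¬ P a := by
  classical
  intro hP
  have hs : (s.card : ℝ) ≠ 0 := mod_cast (card_pos.mpr ⟨a, ha⟩).ne'
  have hfilter : (s.filter P).card ≠ 0 := (card_pos.mpr ⟨a, mem_filter.mpr ⟨ha, hP⟩⟩).ne'
  exact hfilter (mod_cast (div_eq_zero_iff.mp h).resolve_right hs)

end Prob

section Fibers

variable {α β γ : Type*} [DecidableEq β] (S : Finset α) (κ : α → β)

lemma sum_prob_fiber_eq (P : α → Prop) :
    ∑ Y ∈ S, prob (S.filter (κ · = κ Y)) P = S.card * prob S P := by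
  classical
  rw [card_mul_prob, sum_comp (fun b => prob (S.filter (κ · = b)) P) κ,
    card_eq_sum_card_fiberwise (f := κ) (t := S.image κ)
      fun a ha => mem_image_of_mem κ (mem_filter.mp ha).1,
    Nat.cast_sum]
  refine sum_congr rfl fun b hb => ?_
  obtain ⟨Y, hY, rfl⟩ := mem_image.mp hb
  have hfiber : ((S.filter (κ · = κ Y)).card : ℝ) ≠ 0 := by
    have : Y ∈ S.filter (κ · = κ Y) := mem_filter.mpr ⟨hY, rfl⟩
    exact mod_cast (card_pos.mpr ⟨Y, this⟩).ne'
  rw [nsmul_eq_mul, prob, mul_div_cancel₀ _ hfiber, filter_comm]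

lemma apply_eq_of_sum_prob_fiber_ne_eq_zero {g : α → γ}
    (hg : ∑ Y ∈ S, prob (S.filter (κ · = κ Y)) (g · ≠ g Y) = 0)
    {Y Z : α} (hY : Y ∈ S) (hZ : Z ∈ S) (hYZ : κ Z = κ Y) : g Z = g Y := by
  have hterm := (sum_eq_zero_iff_of_nonneg fun Y _ => prob_nonneg _ _).mp hg Y hY
  simpa using not_of_prob_eq_zero hterm (mem_filter.mpr ⟨hZ, hYZ⟩)

lemma sum_prob_fiber_ne_le {f g : α → γ}
    (hg : ∀ Y ∈ S, ∀ Z ∈ S, κ Z = κ Y → g Z = g Y) :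
    ∑ Y ∈ S, prob (S.filter (κ · = κ Y)) (f · ≠ f Y)
      ≤ 2 * (S.card * prob S (fun Z => f Z ≠ g Z)) := by
  classical
  have htriangle : ∀ Y ∈ S, prob (S.filter (κ · = κ Y)) (f · ≠ f Y)
      ≤ prob (S.filter (κ · = κ Y)) (fun Z => f Z ≠ g Z) + if f Y ≠ g Y then 1 else 0 := by
    intro Y hY
    by_cases hfg : f Y = g Y
    · rw [if_neg (not_not.mpr hfg), add_zero]
      refine prob_mono _ fun Z hZ hne heq => hne ?_
      obtain ⟨hZ, hκ⟩ := mem_filter.mp hZ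
      rw [heq, hg Y hY Z hZ hκ, hfg]
    · rw [if_pos hfg]
      linarith [prob_le_one (S.filter (κ · = κ Y)) (f · ≠ f Y),
        prob_nonneg (S.filter (κ · = κ Y)) (fun Z => f Z ≠ g Z)]
  calc ∑ Y ∈ S, prob (S.filter (κ · = κ Y)) (f · ≠ f Y)
      ≤ ∑ Y ∈ S, (prob (S.filter (κ · = κ Y)) (fun Z => f Z ≠ g Z)
          + if f Y ≠ g Y then 1 else 0) := sum_le_sum htriangle
    _ = 2 * (S.card * prob S (fun Z => f Z ≠ g Z)) := by
        rw [sum_add_distrib, sum_prob_fiber_eq, sum_boole, ← card_mul_prob]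
        ring

end Fibers

section Mechanism

variable {m n : ℕ} (X : Finset (Opinion m)) {F H : Mechanism m n} {j : Fin m}

lemma apply_eq_of_DIj_eq_zero (hH : DIj X H j = 0) {Y Z : Profile m n}
    (hY : Y ∈ profiles X n) (hZ : Z ∈ profiles X n) (hYZ : col Z j = col Y j) :
    H Z j = H Y j := by
  have hcard : ((profiles X n).card : ℝ) ≠ 0 := mod_cast (card_pos.mpr ⟨Y, hY⟩).ne'
  exact apply_eq_of_sum_prob_fiber_ne_eq_zero _ (col · j)
    ((div_eq_zero_iff.mp hH).resolve_right hcard) hY hZ hYZ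

lemma DIj_le_two_mul_mdist (hH : DIj X H j = 0) : DIj X F j ≤ 2 * mdist X F H := by
  have hsum := sum_prob_fiber_ne_le (profiles X n) (col · j) (f := (F · j)) (g := (H · j))
    fun Y hY Z hZ => apply_eq_of_DIj_eq_zero X hH hY hZ
  have hissue : prob (profiles X n) (fun Z => F Z j ≠ H Z j) ≤ mdist X F H :=
    prob_mono _ fun Z _ hne heq => hne (congrFun heq j)
  refine div_le_of_le_mul₀ (Nat.cast_nonneg _) (mul_nonneg zero_le_two (prob_nonneg _ _)) ?_
  calc _ ≤ 2 * ((profiles X n).card * prob (profiles X n) (fun Z => F Z j ≠ H Z j)) := hsum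
    _ = 2 * prob (profiles X n) (fun Z => F Z j ≠ H Z j) * (profiles X n).card := by ring
    _ ≤ 2 * mdist X F H * (profiles X n).card := by gcongr

end Mechanism

theorem DIj_ge_far_general (m n : ℕ) (X : Finset (Opinion m))
    (F : Mechanism m n) (j : Fin m) (ε : ℝ)
    (hDI : ε ≤ DIj X F j) :
    ∀ H : Mechanism m n, DIj X H j = 0 → ε / 2 ≤ mdist X F H := by
  intro H hH
  linarith [DIj_le_two_mul_mdist X hH (F := F)]

/-- if `DI^j(F) ≥ ε` then `F` is `ε/2`-far from every mechanism with `DI^j = 0`. -/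
theorem DIj_ge_far (m n : ℕ) (X : Finset (Opinion m)) (hne : X.Nonempty)
    (F : Mechanism m n) (j : Fin m) (ε : ℝ) (hε : 0 ≤ ε)
    (hDI : ε ≤ DIj X F j) :
    ∀ H : Mechanism m n, DIj X H j = 0 → ε / 2 ≤ mdist X F H :=
  DIj_ge_far_general m n X F j ε hDI

end JudgementAggregation
end

section
/- Let m ≥ 2, let f^1,…,f^m : {0,1}^n → {0,1}, let i ∈ {1,…,n} be a voter, and let k, l ∈ {1,…,m} be two distinct issues. Then OSI_i(f^k) · Inf_i(f^l) · ∏_{j≠k,l} d(f^j, 0) ≤ 4·ĨC(f^1,…,f^m). -/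
/-! Let `S` be the event that `x^k_i = 0`, `f^k(x^k) = 1`, voter `i` is pivotal for `f^l` at `x^l`,
and `f^j(x^j) = 1` for every other `j`. The `x^j` are independent and `Pr[x_i = 0] = 1/2`, so
`Pr[S]` is half the left-hand side. Flipping the bit `x^l_i` maps `S` to itself, leaves the meet
`x^1 ∧ ⋯ ∧ x^m` unchanged because `x^k_i = 0`, and flips `f^1(x^1) ∧ ⋯ ∧ f^m(x^m)` because `i` is
pivotal for `f^l`. Hence every completion `h` errs on `x` or on its flip, and
`Pr[S] ≤ 2 ICand(f, h)`. -/
namespace JudgementAggregation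

open Finset

/-- Distance between boolean functions: probability of disagreement, uniform on `{0,1}^n`. -/
noncomputable def bdist {n : ℕ} (f g : (Fin n → Bool) → Bool) : ℝ :=
  prob (Finset.univ : Finset (Fin n → Bool)) (fun x => f x ≠ g x)

/-- Inconsistency index of `⟨f^1,…,f^m,h⟩` for the conjunction agenda over `m` premises:
`Pr_{x^1,…,x^m i.i.d. uniform}[ f^1(x^1) ∧ ⋯ ∧ f^m(x^m) ≠ h(x^1 ∧ ⋯ ∧ x^m) ]`. -/
noncomputable def ICand {m n : ℕ} (f : Fin m → (Fin n → Bool) → Bool)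
    (h : (Fin n → Bool) → Bool) : ℝ :=
  prob (Finset.univ : Finset (Fin m → Fin n → Bool)) (fun x =>
    decide (∀ j, f j (x j) = true) ≠ h (fun i => decide (∀ j, x j i = true)))

/-- `ĨC(f^1,…,f^m)`: minimal inconsistency index over all completions `h`. -/
noncomputable def ICmin {m n : ℕ} (f : Fin m → (Fin n → Bool) → Bool) : ℝ :=
  ⨅ h : (Fin n → Bool) → Bool, ICand f h

/-- The influence (Banzhaf index) of voter `i` on `f`. -/
noncomputable def influence {n : ℕ} (i : Fin n) (f : (Fin n → Bool) → Bool) : ℝ :=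
  prob (Finset.univ : Finset (Fin n → Bool)) (fun x => f x ≠ f (Function.update x i (!x i)))

/-- The (zero-)ignorability of voter `i` on `f`: `Pr[f(x) = 1 | x_i = 0]`. -/
noncomputable def osi {n : ℕ} (i : Fin n) (f : (Fin n → Bool) → Bool) : ℝ :=
  prob (Finset.univ.filter (fun x : Fin n → Bool => x i = false)) (fun x => f x = true)

open Function

lemma prob_congr {α : Type*} {s : Finset α} {P Q : α → Prop} (h : ∀ x, P x ↔ Q x) :
    prob s P = prob s Q := by
  rw [funext fun x => propext (h x)]

section Probability

variable {α : Type*} [Fintype α]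

lemma prob_univ (P : α → Prop) [DecidablePred P] :
    prob univ P = (#{x | P x} : ℝ) / Fintype.card α := by
  unfold prob
  rw [card_univ]
  congr!

lemma prob_pi {ι : Type*} [Fintype ι] [DecidableEq ι] (P : ι → α → Prop) :
    prob univ (fun x : ι → α => ∀ j, P j (x j)) = ∏ j, prob univ (P j) := by
  classical
  have hpi : ({x | ∀ j, P j (x j)} : Finset (ι → α)) = Fintype.piFinset fun j => {a | P j a} := by
    ext x
    simp
  simp only [prob_univ, hpi, Fintype.card_piFinset, Fintype.card_fun, prod_div_distrib,
    prod_const, card_univ]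
  push_cast
  rfl

lemma prob_le_two_mul_of_involutive {σ : α → α} (hσ : Involutive σ) {P Q : α → Prop}
    (h : ∀ x, P x → Q x ∨ Q (σ x)) : prob univ P ≤ 2 * prob univ Q := by
  classical
  set T : Finset α := {x | Q x} with hT
  have hcard : #{x | P x} ≤ 2 * #T :=
    calc #{x | P x}
        ≤ #(T ∪ T.image σ) := by
          refine card_le_card fun x hx => ?_
          simp only [hT, mem_filter, mem_univ, true_and, mem_union, mem_image] at hx ⊢
          exact (h x hx).imp id fun hσx => ⟨σ x, hσx, hσ x⟩
      _ ≤ #T + #(T.image σ) := card_union_le _ _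
      _ ≤ 2 * #T := by linarith [card_image_le (s := T) (f := σ)]
  rw [prob_univ, prob_univ, mul_div_assoc']
  gcongr
  exact_mod_cast hcard

end Probability

lemma two_mul_card_filter_apply_eq {ι : Type*} [Fintype ι] [DecidableEq ι] (i : ι) (b : Bool) :
    2 * #{x : ι → Bool | x i = b} = 2 ^ Fintype.card ι := by
  have hι : 0 < Fintype.card ι := Fintype.card_pos_iff.2 ⟨i⟩
  rw [← Fintype.piFinset_univ, Fintype.card_filter_piFinset_const_eq_of_mem _ _ (mem_univ b),
    card_univ, Fintype.card_bool, ← pow_succ', Nat.sub_add_cancel hι]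

lemma osi_eq_two_mul_prob {n : ℕ} (i : Fin n) (f : (Fin n → Bool) → Bool) :
    osi i f = 2 * prob univ (fun x => x i = false ∧ f x = true) := by
  classical
  have hhalf : (#{x : Fin n → Bool | x i = false} : ℝ) = 2 ^ n / 2 := by
    rw [eq_div_iff two_ne_zero, mul_comm]
    exact_mod_cast (Fintype.card_fin n ▸ two_mul_card_filter_apply_eq i false)
  unfold osi
  rw [prob, filter_filter, hhalf, prob_univ, Fintype.card_fun, Fintype.card_bool,
    Fintype.card_fin]
  push_cast
  field_simp
  congr!

section Flip

variable {ι κ : Type*} [DecidableEq ι] [DecidableEq κ]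

def flipCoord (i : κ) (y : κ → Bool) : κ → Bool :=
  update y i (!y i)

lemma flipCoord_involutive (i : κ) : Involutive (flipCoord i) := fun y => by
  simp [flipCoord]

def flipEntry (l : ι) (i : κ) (x : ι → κ → Bool) : ι → κ → Bool :=
  update x l (flipCoord i (x l))

lemma flipEntry_involutive (l : ι) (i : κ) : Involutive (flipEntry l i) := fun x => by
  simp [flipEntry, (flipCoord_involutive i).eq_iff]

lemma influence_eq_prob_flipCoord {n : ℕ} (i : Fin n) (f : (Fin n → Bool) → Bool) :
    influence i f = prob univ (fun x => f x ≠ f (flipCoord i x)) := rfl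

end Flip

section Conjunction

variable {ι κ α : Type*} [Fintype ι]

def conj (f : ι → α → Bool) (x : ι → α) : Bool :=
  decide (∀ j, f j (x j) = true)

def meet (x : ι → κ → Bool) : κ → Bool :=
  fun i => decide (∀ j, x j i = true)

lemma ICand_eq {m n : ℕ} (f : Fin m → (Fin n → Bool) → Bool) (h : (Fin n → Bool) → Bool) :
    ICand f h = prob univ (fun x => conj f x ≠ h (meet x)) := by
  unfold ICand conj meet
  congr!

lemma conj_eq_of_forall_ne {f : ι → α → Bool} {x : ι → α} {l : ι}
    (h : ∀ j ≠ l, f j (x j) = true) : conj f x = f l (x l) := by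
  by_cases hl : f l (x l) = true
  · rw [hl, conj, decide_eq_true_iff]
    intro j
    by_cases hj : j = l
    · exact hj ▸ hl
    · exact h j hj
  · rw [Bool.not_eq_true] at hl
    rw [hl, conj, decide_eq_false_iff_not]
    exact fun hall => absurd (hall l) (by simp [hl])

variable [DecidableEq ι] [DecidableEq κ]

lemma meet_flipEntry {x : ι → κ → Bool} {k l : ι} {i : κ} (hkl : k ≠ l) (hk : x k i = false) :
    meet (flipEntry l i x) = meet x := by
  funext i'
  simp only [meet, decide_eq_decide]
  by_cases hi : i' = i
  · subst hi
    exact iff_of_false (fun hall => by simpa [flipEntry, hkl, hk] using hall k)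
      (fun hall => by simpa [hk] using hall k)
  · refine forall_congr' fun j => ?_
    by_cases hj : j = l
    · subst hj
      simp [flipEntry, flipCoord, hi]
    · simp [flipEntry, hj]

lemma conj_flipEntry_ne {f : ι → (κ → Bool) → Bool} {x : ι → κ → Bool} {l : ι} {i : κ}
    (h : ∀ j ≠ l, f j (x j) = true) (hl : f l (x l) ≠ f l (flipCoord i (x l))) :
    conj f (flipEntry l i x) ≠ conj f x := by
  have h' : ∀ j ≠ l, f j (flipEntry l i x j) = true := fun j hj => by
    simpa [flipEntry, hj] using h j hj
  rw [conj_eq_of_forall_ne h, conj_eq_of_forall_ne h']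
  simpa [flipEntry] using hl.symm

lemma conj_ne_or_conj_flipEntry_ne {f : ι → (κ → Bool) → Bool} {x : ι → κ → Bool} {k l : ι}
    {i : κ} (hkl : k ≠ l) (hk : x k i = false) (h : ∀ j ≠ l, f j (x j) = true)
    (hl : f l (x l) ≠ f l (flipCoord i (x l))) (g : (κ → Bool) → Bool) :
    conj f x ≠ g (meet x) ∨ conj f (flipEntry l i x) ≠ g (meet (flipEntry l i x)) := by
  rw [meet_flipEntry hkl hk, or_iff_not_imp_left, not_not]
  exact fun hx hσx => conj_flipEntry_ne h hl (hσx.trans hx.symm)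

end Conjunction

lemma prod_univ_eq_mul_mul_prod_erase {ι M : Type*} [Fintype ι] [DecidableEq ι] [CommMonoid M]
    (g : ι → M) {k l : ι} (hkl : k ≠ l) :
    ∏ j, g j = g k * g l * ∏ j ∈ (univ.erase k).erase l, g j := by
  rw [← mul_prod_erase univ g (mem_univ k),
    ← mul_prod_erase _ g (mem_erase.2 ⟨hkl.symm, mem_univ l⟩), mul_assoc]

theorem osi_mul_influence_le_general (m n : ℕ)
    (f : Fin m → (Fin n → Bool) → Bool) (i : Fin n) (k l : Fin m) (hkl : k ≠ l) :
    osi i (f k) * influence i (f l) *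
        ∏ j ∈ (Finset.univ.erase k).erase l, bdist (f j) (fun _ => false) ≤
      4 * ICmin f := by
  classical
  let P : Fin m → (Fin n → Bool) → Prop := fun j y =>
    if j = k then y i = false ∧ f k y = true
    else if j = l then f l y ≠ f l (flipCoord i y) else f j y = true
  have hP : osi i (f k) * influence i (f l) *
      ∏ j ∈ (univ.erase k).erase l, bdist (f j) (fun _ => false) =
        2 * prob univ (fun x : Fin m → Fin n → Bool => ∀ j, P j (x j)) := by
    rw [prob_pi, prod_univ_eq_mul_mul_prod_erase _ hkl, osi_eq_two_mul_prob,
      influence_eq_prob_flipCoord]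
    simp only [P, if_neg hkl.symm, mul_assoc]
    congr 3
    refine prod_congr rfl fun j hj => prob_congr fun y => ?_
    obtain ⟨hjl, hjk⟩ : j ≠ l ∧ j ≠ k := by simpa using hj
    simp [hjl, hjk]
  have hbound : ∀ h,
      prob univ (fun x : Fin m → Fin n → Bool => ∀ j, P j (x j)) ≤ 2 * ICand f h := by
    intro h
    rw [ICand_eq]
    refine prob_le_two_mul_of_involutive (flipEntry_involutive l i) fun x hx => ?_
    have hk : x k i = false ∧ f k (x k) = true := by simpa [P] using hx k
    have hl : f l (x l) ≠ f l (flipCoord i (x l)) := by simpa [P, hkl.symm] using hx l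
    have htrue : ∀ j ≠ l, f j (x j) = true := fun j hjl => by
      by_cases hjk : j = k
      · exact hjk ▸ hk.2
      · simpa [P, hjk, hjl] using hx j
    exact conj_ne_or_conj_flipEntry_ne hkl hk.1 htrue hl h
  rw [hP, ICmin, Real.mul_iInf_of_nonneg (by norm_num)]
  exact le_ciInf fun h => by linarith [hbound h]

/-- bound on ignorability times influence via the minimal inconsistency index. -/
theorem osi_mul_influence_le (m n : ℕ) (hm : 2 ≤ m)
    (f : Fin m → (Fin n → Bool) → Bool) (i : Fin n) (k l : Fin m) (hkl : k ≠ l) :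
    osi i (f k) * influence i (f l) *
        ∏ j ∈ (Finset.univ.erase k).erase l, bdist (f j) (fun _ => false) ≤
      4 * ICmin f :=
  osi_mul_influence_le_general m n f i k l hkl

end JudgementAggregation
end
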